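/- The Cartan–Serre map does not commute with the join in general: for the basis elements x = [1] ⊗ [1] and y = [0] ⊗ [0,1] of C(□^2) one has CS(x) ∗ CS(y) = 0 while CS(x ∗ y) = ±[0,1,2] ≠ 0; in particular CS(x ∗ y) ≠ CS(x) ∗ CS(y). -/

import Mathlib

/-- The three cells of the interval: `[0]`, `[0,1]` (written `mid`), and `[1]`. -/
inductive CubeF : Type
  | zero : CubeF
  | mid : CubeF
  | one : CubeF
  deriving DecidableEq

namespace CartanSerre

/-- Basis elements of the cubical chain complex `C(□^n)`: tensors `x_1 ⊗ ⋯ ⊗ x_n`. -/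
abbrev CubeB (n : ℕ) := Fin n → CubeF
/-- The cubical chain complex `C(□^n)` (as the free ℤ-module on its basis). -/
abbrev CubeChain (n : ℕ) := CubeB n →₀ ℤ
/-- `C(□^n) ⊗ C(□^n)`, modeled as the free ℤ-module on pairs of basis elements. -/
abbrev CubeChain2 (n : ℕ) := (CubeB n × CubeB n) →₀ ℤ
/-- Basis elements of `C(Δ^n)`: strictly increasing tuples `[v_0, …, v_m]` with
`v_i ∈ {0,…,n}`, i.e. nonempty finite subsets of `Fin (n+1)` (`∅` is not used). -/
abbrev SimpB (n : ℕ) := Finset (Fin (n + 1))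
/-- The normalized simplicial chain complex `C(Δ^n)`. -/
abbrev SimpChain (n : ℕ) := SimpB n →₀ ℤ
/-- `C(Δ^n) ⊗ C(Δ^n)`. -/
abbrev SimpChain2 (n : ℕ) := (SimpB n × SimpB n) →₀ ℤ

/-- Degree of a cubical basis element: the number of factors equal to `[0,1]`. -/
def cubeDeg {n : ℕ} (x : CubeB n) : ℕ :=
  (Finset.univ.filter fun i => x i = CubeF.mid).card

/-- Degree of a simplicial basis element `[v_0, …, v_m]`, namely `m`. -/
def simpDeg {n : ℕ} (s : SimpB n) : ℕ := s.card - 1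

/-- The cubical boundary on a basis element. -/
noncomputable def cubeBdFun (n : ℕ) (x : CubeB n) : CubeChain n :=
  ∑ i ∈ Finset.univ.filter (fun i => x i = CubeF.mid),
    ((-1 : ℤ) ^ (Finset.univ.filter fun j => j < i ∧ x j = CubeF.mid).card) •
      (Finsupp.single (Function.update x i CubeF.one) 1 -
        Finsupp.single (Function.update x i CubeF.zero) 1)

/-- The cubical boundary `∂ : C(□^n) → C(□^n)`. -/
noncomputable def cubeBd (n : ℕ) : CubeChain n →ₗ[ℤ] CubeChain n :=
  Finsupp.lift (CubeChain n) ℤ (CubeB n) (cubeBdFun n)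

/-- The (normalized) simplicial boundary on a basis element. -/
noncomputable def simpBdFun (n : ℕ) (s : SimpB n) : SimpChain n :=
  if 2 ≤ s.card then
    ∑ v ∈ s, ((-1 : ℤ) ^ (s.filter fun w => w < v).card) • Finsupp.single (s.erase v) 1
  else 0

/-- The simplicial boundary `∂ : C(Δ^n) → C(Δ^n)`. -/
noncomputable def simpBd (n : ℕ) : SimpChain n →ₗ[ℤ] SimpChain n :=
  Finsupp.lift (SimpChain n) ℤ (SimpB n) (simpBdFun n)

/-- `p(x) - 1` (0-indexed): the first position of a factor `[0]`, or `n` if there is none. -/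
def pIdx {n : ℕ} (x : CubeB n) : Fin (n + 1) :=
  ⟨(List.ofFn x).findIdx (fun c => decide (c = CubeF.zero)), by
    have h : (List.ofFn x).findIdx (fun c => decide (c = CubeF.zero)) ≤ (List.ofFn x).length :=
      List.findIdx_le_length
    simp only [List.length_ofFn] at h
    omega⟩

/-- The vertex set `[q_1 - 1, …, q_m - 1, p(x) - 1]` of the image of `x` under `CS`. -/
def csSet {n : ℕ} (x : CubeB n) : SimpB n :=
  insert (pIdx x) ((Finset.univ.filter fun i => x i = CubeF.mid).image Fin.castSucc)

/-- The Cartan–Serre map `CS` on a cubical basis element. -/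
noncomputable def csFun (n : ℕ) (x : CubeB n) : SimpChain n :=
  if ∃ i j : Fin n, i < j ∧ x i = CubeF.zero ∧ x j = CubeF.mid then 0
  else Finsupp.single (csSet x) 1

/-- The Cartan–Serre chain map `CS : C(□^n) → C(Δ^n)`. -/
noncomputable def csL (n : ℕ) : CubeChain n →ₗ[ℤ] SimpChain n :=
  Finsupp.lift (SimpChain n) ℤ (CubeB n) (csFun n)

/-- The cubical counit `ε_□ : C(□^n) → ℤ`. -/
noncomputable def cubeEps (n : ℕ) : CubeChain n →ₗ[ℤ] ℤ :=
  Finsupp.lift ℤ ℤ (CubeB n) (fun x => if cubeDeg x = 0 then (1 : ℤ) else 0)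

/-- The simplicial counit `ε_Δ : C(Δ^n) → ℤ`. -/
noncomputable def simpEps (n : ℕ) : SimpChain n →ₗ[ℤ] ℤ :=
  Finsupp.lift ℤ ℤ (SimpB n) (fun s => if s.card = 1 then (1 : ℤ) else 0)

/-- Tensor product of two elements of free modules, in the product-basis model. -/
noncomputable def tensorF {α β : Type*} (a : α →₀ ℤ) (b : β →₀ ℤ) : (α × β) →₀ ℤ :=
  a.sum fun i r => b.sum fun j s => Finsupp.single (i, j) (r * s)

/-- Left factor of the Serre diagonal summand indexed by `S`:
factors in `S` contribute `[0,1]`, the other `[0,1]`-factors contribute `[0]`. -/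
def serreL {n : ℕ} (x : CubeB n) (S : Finset (Fin n)) : CubeB n := fun i =>
  if x i = CubeF.mid then (if i ∈ S then CubeF.mid else CubeF.zero) else x i

/-- Right factor of the Serre diagonal summand indexed by `S`. -/
def serreR {n : ℕ} (x : CubeB n) (S : Finset (Fin n)) : CubeB n := fun i =>
  if x i = CubeF.mid then (if i ∈ S then CubeF.one else CubeF.mid) else x i

/-- Koszul sign exponent of the Serre diagonal summand indexed by `S`. -/
def serreSign {n : ℕ} (x : CubeB n) (S : Finset (Fin n)) : ℕ :=
  ((Finset.univ : Finset (Fin n × Fin n)).filter fun p =>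
    p.1 < p.2 ∧ x p.1 = CubeF.mid ∧ p.1 ∉ S ∧ p.2 ∈ S).card

/-- The Serre diagonal `Δ_□` on a basis element: the tensor product (with Koszul
signs) of `Δ[0] = [0]⊗[0]`, `Δ[1] = [1]⊗[1]`, `Δ[0,1] = [0]⊗[0,1] + [0,1]⊗[1]`. -/
noncomputable def serreDiagFun (n : ℕ) (x : CubeB n) : CubeChain2 n :=
  ∑ S ∈ (Finset.univ.filter fun i => x i = CubeF.mid).powerset,
    ((-1 : ℤ) ^ serreSign x S) • Finsupp.single (serreL x S, serreR x S) 1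

/-- The Serre diagonal `Δ_□ : C(□^n) → C(□^n) ⊗ C(□^n)`. -/
noncomputable def serreDiag (n : ℕ) : CubeChain n →ₗ[ℤ] CubeChain2 n :=
  Finsupp.lift (CubeChain2 n) ℤ (CubeB n) (serreDiagFun n)

/-- The Alexander–Whitney coproduct on a basis element:
`Δ_AW [v_0,…,v_m] = Σ_i [v_0,…,v_i] ⊗ [v_i,…,v_m]`. -/
noncomputable def awFun (n : ℕ) (s : SimpB n) : SimpChain2 n :=
  ∑ v ∈ s, Finsupp.single (s.filter fun w => w ≤ v, s.filter fun w => v ≤ w) 1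

/-- The Alexander–Whitney coproduct `Δ_AW : C(Δ^n) → C(Δ^n) ⊗ C(Δ^n)`. -/
noncomputable def awDiag (n : ℕ) : SimpChain n →ₗ[ℤ] SimpChain2 n :=
  Finsupp.lift (SimpChain2 n) ℤ (SimpB n) (awFun n)

/-- `CS ⊗ CS : C(□^n) ⊗ C(□^n) → C(Δ^n) ⊗ C(Δ^n)` (no Koszul signs: `CS` has degree 0). -/
noncomputable def cs2L (n : ℕ) : CubeChain2 n →ₗ[ℤ] SimpChain2 n :=
  Finsupp.lift (SimpChain2 n) ℤ (CubeB n × CubeB n)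
    (fun p => tensorF (csFun n p.1) (csFun n p.2))

/-- The join on single cube factors: `[0] ∗ [1] = [0,1]`, `[1] ∗ [0] = -[0,1]`,
all other joins of basis elements vanish (the outcome factor being `[0,1]`). -/
def joinF : CubeF → CubeF → ℤ
  | CubeF.zero, CubeF.one => 1
  | CubeF.one, CubeF.zero => -1
  | _, _ => 0

/-- The cubical join `∗` on basis elements. -/
noncomputable def cubeJoinFun (n : ℕ) (x y : CubeB n) : CubeChain n :=
  ((-1 : ℤ) ^ cubeDeg x) •
    ∑ l : Fin n,
      ((if (∀ j, j < l → y j ≠ CubeF.mid) ∧ (∀ j, l < j → x j ≠ CubeF.mid) then (1 : ℤ) else 0) *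
          joinF (x l) (y l)) •
        Finsupp.single (fun j => if j < l then x j else if j = l then CubeF.mid else y j) 1

/-- The cubical join, extended bilinearly to chains. -/
noncomputable def cubeJoinC (n : ℕ) (a b : CubeChain n) : CubeChain n :=
  a.sum fun x r => b.sum fun y s => (r * s) • cubeJoinFun n x y

/-- The simplicial join `∗` on basis elements: `0` if the vertex sets meet, and
otherwise `(-1)^{p + |σ|}` times the union, `|σ|` counting the inversions. -/
noncomputable def simpJoinFun (n : ℕ) (s t : SimpB n) : SimpChain n :=
  if s ∩ t = ∅ ∧ s.Nonempty ∧ t.Nonempty then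
    ((-1 : ℤ) ^ ((s.card - 1) + ((s ×ˢ t).filter fun p => p.2 < p.1).card)) •
      Finsupp.single (s ∪ t) 1
  else 0

/-- The simplicial join, extended bilinearly to chains. -/
noncomputable def simpJoinC (n : ℕ) (a b : SimpChain n) : SimpChain n :=
  a.sum fun s r => b.sum fun t u => (r * u) • simpJoinFun n s t

/-- The linear order `[0] < [0,1] < [1]` on interval cells, via `0 < 1 < 2`. -/
def cellVal : CubeF → ℕ
  | CubeF.zero => 0
  | CubeF.mid => 1
  | CubeF.one => 2

/-- The componentwise partial order on cubical basis elements,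
with `[0] < [0,1] < [1]` on each factor. -/
def cubeLe {n : ℕ} (x y : CubeB n) : Prop := ∀ i, cellVal (x i) ≤ cellVal (y i)

/-- Left-parenthesized iterated join of a nonempty list (the base case `[]` is junk). -/
noncomputable def foldJoin {C : Type*} (join : C → C → C) (z : C) : List C → C
  | [] => z
  | a :: l => l.foldl join a

/-- Left-parenthesized iterated cubical join `∗^{k}` of `k+1` basis elements. -/
noncomputable def iterCubeJoin (n k : ℕ) (f : Fin (k + 1) → CubeB n) : CubeChain n :=
  foldJoin (cubeJoinC n) 0 (List.ofFn fun i : Fin (k + 1) => (Finsupp.single (f i) 1 : CubeChain n))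

/-- Left-parenthesized iterated simplicial join `∗^{k}` of `k+1` chains. -/
noncomputable def iterSimpJoin (n k : ℕ) (g : Fin (k + 1) → SimpChain n) : SimpChain n :=
  foldJoin (simpJoinC n) 0 (List.ofFn g)

/-- The iterated Serre diagonal `Δ_□^k` on a basis element, with `k+1` output factors
(iterated on the last factor; this is unambiguous by coassociativity, and no Koszul
signs appear since `Δ_□` has degree `0`). -/
noncomputable def serreIterFun (n : ℕ) : (k : ℕ) → CubeB n → ((Fin (k + 1) → CubeB n) →₀ ℤ)
  | 0, x => Finsupp.single (fun _ => x) 1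
  | k + 1, x =>
    (serreIterFun n k x).sum fun f c =>
      (serreDiagFun n (f (Fin.last k))).sum fun p d =>
        Finsupp.single
          (fun i : Fin (k + 2) =>
            if h : (i : ℕ) < k then f ⟨(i : ℕ), by omega⟩
            else if (i : ℕ) = k then p.1 else p.2) (c * d)

/-- The iterated Serre diagonal `Δ_□^k : C(□^n) → C(□^n)^{⊗(k+1)}`. -/
noncomputable def serreIter (n k : ℕ) : CubeChain n →ₗ[ℤ] ((Fin (k + 1) → CubeB n) →₀ ℤ) :=
  Finsupp.lift _ ℤ (CubeB n) (serreIterFun n k)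

/-- The iterated Alexander–Whitney coproduct `Δ_AW^k` on a basis element. -/
noncomputable def awIterFun (n : ℕ) : (k : ℕ) → SimpB n → ((Fin (k + 1) → SimpB n) →₀ ℤ)
  | 0, s => Finsupp.single (fun _ => s) 1
  | k + 1, s =>
    (awIterFun n k s).sum fun f c =>
      (awFun n (f (Fin.last k))).sum fun p d =>
        Finsupp.single
          (fun i : Fin (k + 2) =>
            if h : (i : ℕ) < k then f ⟨(i : ℕ), by omega⟩
            else if (i : ℕ) = k then p.1 else p.2) (c * d)

/-- The iterated Alexander–Whitney coproduct `Δ_AW^k : C(Δ^n) → C(Δ^n)^{⊗(k+1)}`. -/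
noncomputable def awIter (n k : ℕ) : SimpChain n →ₗ[ℤ] ((Fin (k + 1) → SimpB n) →₀ ℤ) :=
  Finsupp.lift _ ℤ (SimpB n) (awIterFun n k)

/-- The action of a permutation `τ` on a `k`-fold tensor of basis elements,
with the Koszul sign determined by the degrees of the factors it transposes. -/
noncomputable def koszulPermFun {α : Type*} (deg : α → ℕ) {k : ℕ} (τ : Equiv.Perm (Fin k))
    (f : Fin k → α) : (Fin k → α) →₀ ℤ :=
  ((-1 : ℤ) ^ ∑ p ∈ (Finset.univ : Finset (Fin k × Fin k)).filter
      (fun p => p.1 < p.2 ∧ τ p.2 < τ p.1), deg (f (τ p.1)) * deg (f (τ p.2))) •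
    Finsupp.single (fun i => f (τ i)) 1

/-- The action of a permutation on `k`-fold tensors, with Koszul signs. -/
noncomputable def koszulPerm {α : Type*} (deg : α → ℕ) {k : ℕ} (τ : Equiv.Perm (Fin k)) :
    ((Fin k → α) →₀ ℤ) →ₗ[ℤ] ((Fin k → α) →₀ ℤ) :=
  Finsupp.lift _ ℤ (Fin k → α) (koszulPermFun deg τ)

/-- Tensor product of an `r`-tuple of elements of a free module, product-basis model. -/
noncomputable def tensorPi {r : ℕ} {α : Type*} [DecidableEq α] (c : Fin r → (α →₀ ℤ)) :
    (Fin r → α) →₀ ℤ :=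
  ∑ g ∈ Fintype.piFinset (fun i => (c i).support), Finsupp.single g (∏ i, (c i) (g i))

/-- `CS^{⊗ r} : C(□^n)^{⊗ r} → C(Δ^n)^{⊗ r}` (no Koszul signs: `CS` has degree 0). -/
noncomputable def csTensor (n r : ℕ) : ((Fin r → CubeB n) →₀ ℤ) →ₗ[ℤ] ((Fin r → SimpB n) →₀ ℤ) :=
  Finsupp.lift _ ℤ (Fin r → CubeB n) (fun f => tensorPi fun i => csFun n (f i))

/-- The index in `Fin (k_1 + ⋯ + k_r)` of the `j`-th tensor factor of the `i`-th block. -/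
def blockIdx {r : ℕ} (K : Fin r → ℕ) {m : ℕ} (hm : m + 1 = ∑ i, K i) (i : Fin r)
    (j : Fin (K i)) : Fin (m + 1) :=
  ⟨(∑ j' ∈ Finset.univ.filter (fun j' => j' < i), K j') + (j : ℕ), by
    have h2 : (j : ℕ) < K i := j.isLt
    have h3 : K i + ∑ j' ∈ Finset.univ.filter (fun j' => j' < i), K j' ≤ ∑ i', K i' := by
      rw [← Finset.sum_insert (a := i) (s := Finset.univ.filter (fun j' => j' < i)) (by simp)]
      exact Finset.sum_le_sum_of_subset (Finset.subset_univ _)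
    omega⟩

/-- A `(k_1, …, k_r)`-shuffle: a permutation increasing on each block. -/
def IsShuffle {r : ℕ} (K : Fin r → ℕ) {m : ℕ} (hm : m + 1 = ∑ i, K i)
    (σ : Equiv.Perm (Fin (m + 1))) : Prop :=
  ∀ (i : Fin r) (j j' : Fin (K i)), j < j' → σ (blockIdx K hm i j) < σ (blockIdx K hm i j')

/-- Total degree of the `i`-th block of a `k`-fold cubical tensor. -/
def cubeBlockDeg {n r : ℕ} (K : Fin r → ℕ) {m : ℕ} (hm : m + 1 = ∑ i, K i)
    (f : Fin (m + 1) → CubeB n) (i : Fin r) : ℕ :=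
  ∑ j : Fin (K i), cubeDeg (f (blockIdx K hm i j))

/-- Total degree of the `i`-th block of a `k`-fold simplicial tensor. -/
def simpBlockDeg {n r : ℕ} (K : Fin r → ℕ) {m : ℕ} (hm : m + 1 = ∑ i, K i)
    (f : Fin (m + 1) → SimpB n) (i : Fin r) : ℕ :=
  ∑ j : Fin (K i), simpDeg (f (blockIdx K hm i j))

/-- `∗^{k_1 - 1} ⊗ ⋯ ⊗ ∗^{k_r - 1}` on a cubical `k`-fold tensor basis element, with
the Koszul sign for applying the degree-`(k_i - 1)` maps across the earlier blocks. -/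
noncomputable def cubeBlockJoinFun (n r : ℕ) (K : Fin r → ℕ) {m : ℕ} (hm : m + 1 = ∑ i, K i)
    (f : Fin (m + 1) → CubeB n) : (Fin r → CubeB n) →₀ ℤ :=
  ((-1 : ℤ) ^ ∑ p ∈ (Finset.univ : Finset (Fin r × Fin r)).filter (fun p => p.1 < p.2),
      (K p.2 - 1) * cubeBlockDeg K hm f p.1) •
    tensorPi (fun i : Fin r =>
      foldJoin (cubeJoinC n) 0
        (List.ofFn fun j : Fin (K i) => (Finsupp.single (f (blockIdx K hm i j)) 1 : CubeChain n)))

/-- `∗^{k_1 - 1} ⊗ ⋯ ⊗ ∗^{k_r - 1} : C(□^n)^{⊗ k} → C(□^n)^{⊗ r}`. -/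
noncomputable def cubeBlockJoin (n r : ℕ) (K : Fin r → ℕ) {m : ℕ} (hm : m + 1 = ∑ i, K i) :
    ((Fin (m + 1) → CubeB n) →₀ ℤ) →ₗ[ℤ] ((Fin r → CubeB n) →₀ ℤ) :=
  Finsupp.lift _ ℤ (Fin (m + 1) → CubeB n) (cubeBlockJoinFun n r K hm)

/-- `∗^{k_1 - 1} ⊗ ⋯ ⊗ ∗^{k_r - 1}` on a simplicial `k`-fold tensor basis element. -/
noncomputable def simpBlockJoinFun (n r : ℕ) (K : Fin r → ℕ) {m : ℕ} (hm : m + 1 = ∑ i, K i)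
    (f : Fin (m + 1) → SimpB n) : (Fin r → SimpB n) →₀ ℤ :=
  ((-1 : ℤ) ^ ∑ p ∈ (Finset.univ : Finset (Fin r × Fin r)).filter (fun p => p.1 < p.2),
      (K p.2 - 1) * simpBlockDeg K hm f p.1) •
    tensorPi (fun i : Fin r =>
      foldJoin (simpJoinC n) 0
        (List.ofFn fun j : Fin (K i) => (Finsupp.single (f (blockIdx K hm i j)) 1 : SimpChain n)))

/-- `∗^{k_1 - 1} ⊗ ⋯ ⊗ ∗^{k_r - 1} : C(Δ^n)^{⊗ k} → C(Δ^n)^{⊗ r}`. -/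
noncomputable def simpBlockJoin (n r : ℕ) (K : Fin r → ℕ) {m : ℕ} (hm : m + 1 = ∑ i, K i) :
    ((Fin (m + 1) → SimpB n) →₀ ℤ) →ₗ[ℤ] ((Fin r → SimpB n) →₀ ℤ) :=
  Finsupp.lift _ ℤ (Fin (m + 1) → SimpB n) (simpBlockJoinFun n r K hm)

/-- A chain is homogeneous of degree `m` if its support is contained in degree-`m` basis elements. -/
def cubeHomog (n m : ℕ) (c : CubeChain n) : Prop := ∀ x ∈ c.support, cubeDeg x = m

/-- A simplicial chain is homogeneous of degree `m` if every basis element in its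
support is a strictly increasing tuple `[v_0, …, v_m]`, i.e. has `m+1` vertices. -/
def simpHomog (n m : ℕ) (c : SimpChain n) : Prop := ∀ s ∈ c.support, s.card = m + 1

end CartanSerre

namespace CartanSerre

theorem csL_single {n : ℕ} (x : CubeB n) (r : ℤ) :
    csL n (Finsupp.single x r) = r • csFun n x := by
  rw [csL, Finsupp.lift_apply, Finsupp.sum_single_index (zero_smul ℤ (csFun n x))]

theorem csFun_eq_zero_of_lt {n : ℕ} {x : CubeB n} {i j : Fin n} (hij : i < j)
    (hi : x i = CubeF.zero) (hj : x j = CubeF.mid) : csFun n x = 0 :=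
  if_pos ⟨i, j, hij, hi, hj⟩

theorem pIdx_const_mid (n : ℕ) : pIdx (fun _ : Fin n => CubeF.mid) = Fin.last n := by
  ext
  simp only [pIdx, Fin.val_last]
  rw [List.findIdx_eq_length_of_false (by simp), List.length_ofFn]

theorem csFun_const_mid (n : ℕ) :
    csFun n (fun _ => CubeF.mid) = Finsupp.single Finset.univ 1 := by
  rw [csFun, if_neg (by simp), csSet, pIdx_const_mid]
  simp only [Finset.filter_true, Fin.image_castSucc, Finset.insert_compl_self]

theorem simpJoinC_zero_right {n : ℕ} (a : SimpChain n) : simpJoinC n a 0 = 0 := by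
  simp [simpJoinC]

/-- Only the first coordinate contributes: there `[1] ∗ [0] = -[0,1]`, while in the second
`[1] ∗ [0,1] = 0`. -/
theorem cubeJoinFun_one_one_zero_mid :
    cubeJoinFun 2 ![CubeF.one, CubeF.one] ![CubeF.zero, CubeF.mid] =
      -Finsupp.single (fun _ => CubeF.mid) 1 := by
  have hjoined : (fun j : Fin 2 => if j < 0 then (![CubeF.one, CubeF.one] : CubeB 2) j
      else if j = 0 then CubeF.mid else (![CubeF.zero, CubeF.mid] : CubeB 2) j) =
      fun _ => CubeF.mid := by
    funext j; fin_cases j <;> rfl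
  have hdeg : cubeDeg (![CubeF.one, CubeF.one] : CubeB 2) = 0 := by decide
  rw [cubeJoinFun, Fin.sum_univ_two, hjoined, hdeg]
  simp [joinF, Fin.forall_fin_two]

end CartanSerre

open CartanSerre in
/-- The Cartan–Serre map does not commute with the join in general:
for `x = [1] ⊗ [1]` and `y = [0] ⊗ [0,1]` in `C(□²)` one has `CS(x) ∗ CS(y) = 0` while
`CS(x ∗ y) = ±[0,1,2] ≠ 0`; in particular `CS(x ∗ y) ≠ CS(x) ∗ CS(y)`. -/
theorem cartanSerre_not_join_map (x y : CubeB 2)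
    (hx : x = ![CubeF.one, CubeF.one]) (hy : y = ![CubeF.zero, CubeF.mid]) :
    simpJoinC 2 (csFun 2 x) (csFun 2 y) = 0 ∧
    (csL 2 (cubeJoinFun 2 x y) = Finsupp.single ({0, 1, 2} : Finset (Fin 3)) 1 ∨
      csL 2 (cubeJoinFun 2 x y) = -Finsupp.single ({0, 1, 2} : Finset (Fin 3)) 1) ∧
    csL 2 (cubeJoinFun 2 x y) ≠ 0 ∧
    csL 2 (cubeJoinFun 2 x y) ≠ simpJoinC 2 (csFun 2 x) (csFun 2 y) := by
  subst hx hy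
  have hCSy : csFun 2 ![CubeF.zero, CubeF.mid] = 0 :=
    csFun_eq_zero_of_lt (i := 0) (j := 1) Fin.zero_lt_one rfl rfl
  have hjoin : simpJoinC 2 (csFun 2 ![CubeF.one, CubeF.one]) (csFun 2 ![CubeF.zero, CubeF.mid]) =
      0 := by
    rw [hCSy, simpJoinC_zero_right]
  have hCSjoin : csL 2 (cubeJoinFun 2 ![CubeF.one, CubeF.one] ![CubeF.zero, CubeF.mid]) =
      -Finsupp.single ({0, 1, 2} : Finset (Fin 3)) 1 := by
    rw [cubeJoinFun_one_one_zero_mid, map_neg, csL_single, one_smul, csFun_const_mid]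
    rfl
  have hne : -Finsupp.single ({0, 1, 2} : Finset (Fin 3)) (1 : ℤ) ≠ 0 :=
    neg_ne_zero.2 (Finsupp.single_ne_zero.2 one_ne_zero)
  refine ⟨hjoin, Or.inr hCSjoin, hCSjoin ▸ hne, ?_⟩
  rw [hCSjoin, hjoin]
  exact hne
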